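/- arXiv:1802.06976 — 5 statements merged into one kernel-verified Lean document; each statement's English description precedes it below -/
import Mathlib

section
/- Let n ≥ 2 be an integer and let α be a real number with α ∈ ℕ or α ≥ n−2. Then for every n×n real symmetric positive semidefinite matrix A = (a_ij) with all entries nonnegative, the entrywise power A^{∘α} := (a_ij^α) is positive semidefinite. -/
/-!
For integer powers this is the Schur product theorem. For real `α ≥ n - 2` we induct on `n`.
Splitting off the last column `b` of `A` writes `A = D + B` with `D = b bᵀ / a_nn` of rank one
and `B` the Schur complement, which is positive semidefinite and vanishes on the last row and
column. `D^{∘α}` is again of rank one, and integrating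
`d/dt ((1 - t) d + t a)^α = α (a - d) ((1 - t) d + t a)^(α - 1)` over `[0, 1]` gives
`A^{∘α} - D^{∘α} = α ∫₀¹ B ∘ C_t^{∘(α - 1)} dt` with `C_t = (1 - t) D + t A`. On the leading
block this is positive semidefinite by the Schur product theorem and induction, since
`α - 1 ≥ (n - 1) - 2`. For `n = 2` the leading block is the `1 × 1` matrix `a^α - d^α ≥ 0`.
-/

open Matrix

/-- Entrywise power with the convention `0 ^ α := 0` for all `α`. -/
noncomputable def powF (α x : ℝ) : ℝ := if x = 0 then 0 else x ^ α

/-- `ψ_α(x) := sgn(x) * |x| ^ α`, with `ψ_α(0) := 0`. -/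
noncomputable def psiF (α x : ℝ) : ℝ := if x = 0 then 0 else Real.sign x * |x| ^ α

/-- `φ_α(x) := |x| ^ α`, with `φ_α(0) := 0`. -/
noncomputable def phiF (α x : ℝ) : ℝ := if x = 0 then 0 else |x| ^ α

section powF

variable {α : ℝ}

@[simp]
lemma powF_apply_zero (α : ℝ) : powF α 0 = 0 := if_pos rfl

lemma powF_of_ne_zero {x : ℝ} (hx : x ≠ 0) : powF α x = x ^ α := if_neg hx

lemma powF_eq_rpow (hα : α ≠ 0) : powF α = fun x => x ^ α := by
  funext x
  rcases eq_or_ne x 0 with rfl | hx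
  · rw [powF_apply_zero, Real.zero_rpow hα]
  · exact powF_of_ne_zero hx

lemma powF_one : powF 1 = id := by
  simp only [powF_eq_rpow one_ne_zero, Real.rpow_one]
  rfl

lemma powF_natCast {k : ℕ} (hk : k ≠ 0) (x : ℝ) : powF k x = x ^ k := by
  simp [powF_eq_rpow (Nat.cast_ne_zero.mpr hk)]

lemma powF_nonneg {x : ℝ} (hx : 0 ≤ x) : 0 ≤ powF α x := by
  unfold powF
  split_ifs
  exacts [le_rfl, Real.rpow_nonneg hx α]

lemma powF_mul {x y : ℝ} (hx : 0 ≤ x) (hy : 0 ≤ y) : powF α (x * y) = powF α x * powF α y := by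
  rcases eq_or_ne x 0 with rfl | hx₀
  · simp
  rcases eq_or_ne y 0 with rfl | hy₀
  · simp
  rw [powF_of_ne_zero hx₀, powF_of_ne_zero hy₀, powF_of_ne_zero (mul_ne_zero hx₀ hy₀),
    Real.mul_rpow hx hy]

lemma powF_inv {x : ℝ} (hx : 0 ≤ x) : powF α x⁻¹ = (powF α x)⁻¹ := by
  rcases eq_or_ne x 0 with rfl | hx₀
  · simp
  rw [powF_of_ne_zero hx₀, powF_of_ne_zero (inv_ne_zero hx₀), Real.inv_rpow hx]

lemma monotoneOn_powF (hα : 0 ≤ α) : MonotoneOn (powF α) (Set.Ici 0) := by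
  intro x hx y hy hxy
  rcases eq_or_ne x 0 with rfl | hx₀
  · simpa using powF_nonneg hy
  rw [powF_of_ne_zero hx₀, powF_of_ne_zero (by grind)]
  exact Real.rpow_le_rpow hx hxy hα

lemma continuous_powF (hα : 0 < α) : Continuous (powF α) := by
  rw [powF_eq_rpow hα.ne']
  exact Real.continuous_rpow_const hα.le

end powF

lemma rpow_sub_rpow_eq_integral {α : ℝ} (hα : 1 ≤ α) (a d : ℝ) :
    a ^ α - d ^ α = ∫ t in (0 : ℝ)..1, α * (a - d) * ((1 - t) * d + t * a) ^ (α - 1) := by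
  have hderiv (t : ℝ) : HasDerivAt (fun t => ((1 - t) * d + t * a) ^ α)
      (α * (a - d) * ((1 - t) * d + t * a) ^ (α - 1)) t := by
    have hlin : HasDerivAt (fun t => (1 - t) * d + t * a) (a - d) t :=
      ((((hasDerivAt_id' t).const_sub 1).mul_const d).add
        ((hasDerivAt_id' t).mul_const a)).congr_deriv (by ring)
    exact (hlin.rpow_const (Or.inr hα)).congr_deriv (by ring)
  have hcont : Continuous fun t : ℝ => α * (a - d) * ((1 - t) * d + t * a) ^ (α - 1) := by
    have := Real.continuous_rpow_const (sub_nonneg.2 hα)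
    fun_prop
  rw [intervalIntegral.integral_eq_sub_of_hasDerivAt (fun t _ => hderiv t)
    (hcont.intervalIntegrable 0 1)]
  simp

namespace Matrix

section

variable {ι : Type*}

lemma PosSemidef.apply_comm {A : Matrix ι ι ℝ} (hA : A.PosSemidef) (i j : ι) :
    A i j = A j i := by
  simpa using (hA.isHermitian.apply i j).symm

-- When `A l l = 0` this is `0` (as `0⁻¹ = 0`); for positive semidefinite `A` column `l` then
-- vanishes too, so `pivotPart A l` still agrees with `A` on row and column `l`.
noncomputable def pivotPart (A : Matrix ι ι ℝ) (l : ι) : Matrix ι ι ℝ :=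
  (A l l)⁻¹ • vecMulVec (fun i => A i l) (fun i => A i l)

lemma pivotPart_apply (A : Matrix ι ι ℝ) (l i j : ι) :
    pivotPart A l i j = (A l l)⁻¹ * (A i l * A j l) := rfl

lemma pivotPart_nonneg {A : Matrix ι ι ℝ} (hA₀ : ∀ i j, 0 ≤ A i j) (l i j : ι) :
    0 ≤ pivotPart A l i j :=
  mul_nonneg (inv_nonneg.2 (hA₀ l l)) (mul_nonneg (hA₀ i l) (hA₀ j l))

lemma map_powF_sub_map_powF_eq_integral {α : ℝ} (hα : 1 < α) (A D : Matrix ι ι ℝ) :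
    A.map (powF α) - D.map (powF α) = of fun i j =>
      ∫ t in (0 : ℝ)..1, (α • ((A - D) ⊙ ((1 - t) • D + t • A).map (powF (α - 1)))) i j := by
  ext i j
  simp only [sub_apply, map_apply, powF_eq_rpow (by linarith : α ≠ 0),
    powF_eq_rpow (by linarith : α - 1 ≠ 0), rpow_sub_rpow_eq_integral hα.le, of_apply,
    smul_apply, hadamard_apply, add_apply, smul_eq_mul, mul_assoc]

variable [Fintype ι]

open scoped ComplexOrder in
lemma PosSemidef.map_pow {𝕜 : Type*} [RCLike 𝕜] {A : Matrix ι ι 𝕜} (hA : A.PosSemidef)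
    (k : ℕ) : (A.map (· ^ k)).PosSemidef := by
  induction k with
  | zero =>
    have : A.map (· ^ 0) = vecMulVec (fun _ => 1) (star fun _ => 1) := by
      ext
      simp [vecMulVec]
    exact this ▸ posSemidef_vecMulVec_self_star _
  | succ k ih =>
    have : A.map (· ^ (k + 1)) = A.map (· ^ k) ⊙ A := by
      ext
      simp [pow_succ]
    exact this ▸ ih.hadamard hA

lemma PosSemidef.mul_self_apply_le {A : Matrix ι ι ℝ} (hA : A.PosSemidef) (i j : ι) :
    A i j * A i j ≤ A i i * A j j := by
  classical
  have hquad (t : ℝ) : 0 ≤ A i i * (t * t) + 2 * A i j * t + A j j := by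
    have := hA.dotProduct_mulVec_nonneg (Pi.single i t + Pi.single j 1)
    simp only [star_trivial, mulVec_add, mulVec_single, op_smul_eq_smul, MulOpposite.op_one,
      one_smul, dotProduct_add, dotProduct_smul, add_dotProduct, single_dotProduct, col_apply,
      one_mul, smul_eq_mul] at this
    linear_combination this + t * hA.apply_comm j i
  have := discrim_le_zero hquad
  unfold discrim at this
  nlinarith

lemma PosSemidef.apply_eq_zero_of_diag_eq_zero {A : Matrix ι ι ℝ} (hA : A.PosSemidef) {j : ι}
    (hj : A j j = 0) (i : ι) : A i j = 0 := by
  have := hA.mul_self_apply_le i j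
  rw [hj, mul_zero] at this
  exact mul_self_eq_zero.mp (le_antisymm this (mul_self_nonneg _))

lemma posSemidef_intervalIntegral {F : ℝ → Matrix ι ι ℝ} {a b : ℝ} (hab : a ≤ b)
    (hF : ∀ i j, IntervalIntegrable (fun t => F t i j) MeasureTheory.volume a b)
    (hpsd : ∀ t ∈ Set.Icc a b, (F t).PosSemidef) :
    (of fun i j => ∫ t in a..b, F t i j).PosSemidef := by
  refine .of_dotProduct_mulVec_nonneg ?_ fun x => ?_
  · ext i j
    refine intervalIntegral.integral_congr fun t ht => ?_
    rw [Set.uIcc_of_le hab] at ht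
    exact (hpsd t ht).apply_comm j i
  · have hquad : star x ⬝ᵥ (of fun i j => ∫ t in a..b, F t i j) *ᵥ x
        = ∫ t in a..b, star x ⬝ᵥ F t *ᵥ x := by
      simp only [dot_mulVec_eq_sum_sum, of_apply]
      rw [intervalIntegral.integral_finsetSum fun j _ => ?_]
      · refine Finset.sum_congr rfl fun j _ => ?_
        rw [intervalIntegral.integral_finsetSum fun i _ => ?_]
        · simp only [intervalIntegral.integral_const_mul, intervalIntegral.integral_mul_const]
        · exact ((hF i j).const_mul _).mul_const _
      · simpa only [Finset.sum_fn] using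
          IntervalIntegrable.sum _ fun i _ => ((hF i j).const_mul (star x i)).mul_const (x j)
    rw [hquad]
    exact intervalIntegral.integral_nonneg hab fun t ht => (hpsd t ht).dotProduct_mulVec_nonneg x

lemma posSemidef_smul_vecMulVec_self {c : ℝ} (hc : 0 ≤ c) (v : ι → ℝ) :
    (c • vecMulVec v v).PosSemidef := by
  simpa using (posSemidef_vecMulVec_self_star v).smul hc

lemma posSemidef_pivotPart {A : Matrix ι ι ℝ} {l : ι} (hl : 0 ≤ A l l) :
    (pivotPart A l).PosSemidef :=
  posSemidef_smul_vecMulVec_self (inv_nonneg.2 hl) _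

lemma posSemidef_map_powF_pivotPart {A : Matrix ι ι ℝ} {l : ι} (hcol : ∀ i, 0 ≤ A i l)
    (α : ℝ) : ((pivotPart A l).map (powF α)).PosSemidef := by
  have : (pivotPart A l).map (powF α)
      = (powF α (A l l))⁻¹ • vecMulVec (fun i => powF α (A i l)) (fun i => powF α (A i l)) := by
    ext i j
    simp [pivotPart_apply, powF_mul, powF_inv, hcol, mul_nonneg, vecMulVec_apply]
  rw [this]
  exact posSemidef_smul_vecMulVec_self (inv_nonneg.2 (powF_nonneg (hcol l))) _

lemma pivotPart_apply_right {A : Matrix ι ι ℝ} (hA : A.PosSemidef) (l i : ι) :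
    pivotPart A l i l = A i l := by
  rw [pivotPart_apply]
  rcases eq_or_ne (A l l) 0 with h | h
  · simp [hA.apply_eq_zero_of_diag_eq_zero h i]
  · field_simp

lemma pivotPart_apply_left {A : Matrix ι ι ℝ} (hA : A.PosSemidef) (l j : ι) :
    pivotPart A l l j = A l j := by
  rw [pivotPart_apply, mul_comm (A l l), ← pivotPart_apply, pivotPart_apply_right hA,
    hA.apply_comm]

lemma posSemidef_sub_pivotPart {A : Matrix ι ι ℝ} (hA : A.PosSemidef) (l : ι) :
    (A - pivotPart A l).PosSemidef := by
  classical
  refine .of_dotProduct_mulVec_nonneg ?_ fun x => ?_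
  · exact hA.isHermitian.sub (posSemidef_pivotPart hA.diag_nonneg).isHermitian
  · set T := (fun i => A i l) ⬝ᵥ x
    have hAx : (A *ᵥ x) l = T := by
      simp only [mulVec, dotProduct, T, hA.apply_comm l]
    have hxA : x ⬝ᵥ A.col l = T := dotProduct_comm _ _
    -- the quadratic form of the Schur complement at `x` is that of `A` at `y`
    set y := x - (T / A l l) • Pi.single l 1
    have key : star x ⬝ᵥ (A - pivotPart A l) *ᵥ x = star y ⬝ᵥ A *ᵥ y := by
      simp only [y, pivotPart, star_trivial, sub_mulVec, smul_mulVec, vecMulVec_mulVec,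
        mulVec_sub, mulVec_smul, dotProduct_sub, sub_dotProduct, mulVec_single_one,
        dotProduct_smul, smul_dotProduct, single_one_dotProduct, hAx, hxA]
      rw [show (x ⬝ᵥ fun i => A i l) = T from dotProduct_comm _ _]
      simp only [col_apply, smul_eq_mul, op_smul_eq_mul]
      rcases eq_or_ne (A l l) 0 with hc | hc
      · simp [hc]
      · field_simp
        ring
    rw [key]
    exact hA.dotProduct_mulVec_nonneg _

end

variable {n : ℕ} {α : ℝ}

lemma posSemidef_of_submatrix_castSucc {M : Matrix (Fin (n + 1)) (Fin (n + 1)) ℝ}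
    (hrow : ∀ j, M (Fin.last n) j = 0) (hcol : ∀ i, M i (Fin.last n) = 0)
    (h : (M.submatrix Fin.castSucc Fin.castSucc).PosSemidef) : M.PosSemidef := by
  refine .of_dotProduct_mulVec_nonneg ?_ fun x => ?_
  · ext i j
    induction i using Fin.lastCases with
    | last => simp [hrow, hcol]
    | cast i =>
      induction j using Fin.lastCases with
      | last => simp [hrow, hcol]
      | cast j => simpa using h.apply_comm j i
  · have := h.dotProduct_mulVec_nonneg (fun i => x i.castSucc)
    simpa [dot_mulVec_eq_sum_sum, Fin.sum_univ_castSucc, hrow, hcol] using this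

lemma posSemidef_map_powF_of_submatrix_castSucc {A : Matrix (Fin (n + 1)) (Fin (n + 1)) ℝ}
    (hA : A.PosSemidef) (hA₀ : ∀ i j, 0 ≤ A i j)
    (h : ((A.map (powF α) - (pivotPart A (Fin.last n)).map (powF α)).submatrix
      Fin.castSucc Fin.castSucc).PosSemidef) :
    (A.map (powF α)).PosSemidef := by
  have hres := posSemidef_of_submatrix_castSucc (fun j => by simp [pivotPart_apply_left hA])
    (fun i => by simp [pivotPart_apply_right hA]) h
  simpa using (posSemidef_map_powF_pivotPart (l := Fin.last n) (fun i => hA₀ i _) α).add hres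

lemma posSemidef_map_powF_fin_two (hα : 0 ≤ α) {A : Matrix (Fin 2) (Fin 2) ℝ}
    (hA : A.PosSemidef) (hA₀ : ∀ i j, 0 ≤ A i j) : (A.map (powF α)).PosSemidef := by
  refine posSemidef_map_powF_of_submatrix_castSucc hA hA₀ ?_
  set M := (A.map (powF α) - (pivotPart A (Fin.last 1)).map (powF α)).submatrix
      Fin.castSucc Fin.castSucc
  have hM : M = diagonal fun _ => M 0 0 := by
    ext i j
    fin_cases i; fin_cases j; rfl
  have hD₀ := pivotPart_nonneg hA₀ (Fin.last 1) 0 0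
  have hDA : pivotPart A (Fin.last 1) 0 0 ≤ A 0 0 :=
    sub_nonneg.1 ((posSemidef_sub_pivotPart hA _).diag_nonneg (i := 0))
  rw [hM, posSemidef_diagonal_iff]
  exact fun _ => sub_nonneg.2 (monotoneOn_powF hα hD₀ (hD₀.trans hDA) hDA)

lemma posSemidef_map_powF_succ (hα : 1 < α)
    (ih : ∀ B : Matrix (Fin n) (Fin n) ℝ, B.PosSemidef → (∀ i j, 0 ≤ B i j) →
      (B.map (powF (α - 1))).PosSemidef)
    {A : Matrix (Fin (n + 1)) (Fin (n + 1)) ℝ} (hA : A.PosSemidef) (hA₀ : ∀ i j, 0 ≤ A i j) :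
    (A.map (powF α)).PosSemidef := by
  refine posSemidef_map_powF_of_submatrix_castSucc hA hA₀ ?_
  set D := pivotPart A (Fin.last n)
  set C : ℝ → Matrix (Fin (n + 1)) (Fin (n + 1)) ℝ := fun t => (1 - t) • D + t • A
  have hC (t : ℝ) (ht : t ∈ Set.Icc (0 : ℝ) 1) : (C t).PosSemidef :=
    ((posSemidef_pivotPart hA.diag_nonneg).smul (sub_nonneg.2 ht.2)).add (hA.smul ht.1)
  have hC₀ (t : ℝ) (ht : t ∈ Set.Icc (0 : ℝ) 1) (i j) : 0 ≤ C t i j := by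
    have := pivotPart_nonneg hA₀ (Fin.last n) i j
    have := hA₀ i j
    simp only [C, add_apply, smul_apply, smul_eq_mul]
    nlinarith [ht.1, ht.2]
  rw [map_powF_sub_map_powF_eq_integral hα]
  let F t := α • ((A - D).submatrix Fin.castSucc Fin.castSucc ⊙
    ((C t).submatrix Fin.castSucc Fin.castSucc).map (powF (α - 1)))
  have hF (t : ℝ) (ht : t ∈ Set.Icc (0 : ℝ) 1) : (F t).PosSemidef :=
    .smul (.hadamard ((posSemidef_sub_pivotPart hA _).submatrix _)
      (ih _ ((hC t ht).submatrix _) fun i j => hC₀ t ht _ _)) (by linarith)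
  have hFcont (i j) : Continuous fun t => F t i j := by
    have := continuous_powF (sub_pos.2 hα)
    simp only [F, C, submatrix_apply, smul_apply, hadamard_apply, map_apply, add_apply,
      smul_eq_mul]
    fun_prop
  exact posSemidef_intervalIntegral zero_le_one
    (fun i j => (hFcont i j).intervalIntegrable 0 1) hF

theorem PosSemidef.map_powF_of_sub_two_le (hn : 2 ≤ n) (hα : (n : ℝ) - 2 ≤ α)
    {A : Matrix (Fin n) (Fin n) ℝ} (hA : A.PosSemidef) (hA₀ : ∀ i j, 0 ≤ A i j) :
    (A.map (powF α)).PosSemidef := by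
  induction n, hn using Nat.le_induction generalizing α with
  | base => exact posSemidef_map_powF_fin_two (by simpa using hα) hA hA₀
  | succ n hn ih =>
    have hn' : (2 : ℝ) ≤ n := by exact_mod_cast hn
    push_cast at hα
    rcases (show 1 ≤ α by linarith).eq_or_lt with rfl | hα₁
    · simpa [powF_one] using hA
    · exact posSemidef_map_powF_succ hα₁ (fun B hB hB₀ => ih (by linarith) hB hB₀) hA hA₀

end Matrix

/-- FitzGerald–Horn, positive part: if `α` is a positive integer or `α ≥ n - 2`, then the
entrywise `α`-th power of any `n × n` positive semidefinite matrix with nonnegative entries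
is positive semidefinite. -/
theorem stmt0 (n : ℕ) (hn : 2 ≤ n) (α : ℝ)
    (hα : (∃ k : ℕ, 0 < k ∧ α = k) ∨ (n : ℝ) - 2 ≤ α)
    (A : Matrix (Fin n) (Fin n) ℝ) (hA : A.PosSemidef) (hnonneg : ∀ i j, 0 ≤ A i j) :
    (A.map (powF α)).PosSemidef := by
  rcases hα with ⟨k, hk, rfl⟩ | hα
  · have : A.map (powF k) = A.map (· ^ k) := by
      ext
      simp [powF_natCast hk.ne']
    exact this ▸ hA.map_pow k
  · exact hA.map_powF_of_sub_two_le hn hα hnonneg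
end

section
/- Let n ≥ 2 be an integer and let α ∈ (0, n−2) be a real number that is not a positive integer. Then there exists an n×n real symmetric positive semidefinite matrix A = (a_ij) with all entries nonnegative such that the entrywise power A^{∘α} := (a_ij^α) is not positive semidefinite. -/
/-!
Let `A = 𝟙𝟙ᵀ + ε vvᵀ` with distinct positive `vᵢ`; it is positive semidefinite with positive
entries. If `F (1 + x) = ∑ cₖ xᵏ` near `0`, then `zᵀ F[A] z = ∑ₖ cₖ εᵏ (∑ᵢ zᵢ vᵢᵏ)² + O(ε^(N+1))`
for every `z`. Inverting a Vandermonde matrix gives a `z` whose moments `∑ᵢ zᵢ vᵢᵏ` vanish for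
`k < N` and equal `1` for `k = N`, leaving `c_N ε^N + O(ε^(N+1))`, which is negative for small
`ε` once `c_N < 0`. For `F = (·) ^ α` the coefficients are `binom(α, k)`, and
`binom(α, ⌊α⌋ + 2) < 0` when `α` is not an integer; this needs `⌊α⌋ + 3 ≤ n` points, which is
where `α < n - 2` enters. Repeating an index pads the counterexample to size `n`.
-/

open Matrix

open Asymptotics Filter Topology

theorem sum_sum_mul_mul_mul_pow {ι : Type*} [Fintype ι] (z v : ι → ℝ) (x : ℝ) (k : ℕ) :
    ∑ i, ∑ j, z i * z j * (x * (v i * v j)) ^ k = x ^ k * (∑ i, z i * v i ^ k) ^ 2 := by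
  simp_rw [sq, Finset.sum_mul_sum, Finset.mul_sum]
  refine Finset.sum_congr rfl fun i _ => Finset.sum_congr rfl fun j _ => ?_
  ring

theorem isBigO_sum_sum_mul_sub_coeff_mul_pow {ι : Type*} [Fintype ι] {f : ℝ → ℝ} {c : ℕ → ℝ}
    (hf : HasFPowerSeriesAt f (FormalMultilinearSeries.ofScalars ℝ c) 0) {z v : ι → ℝ} {N : ℕ}
    (hlow : ∀ k < N, ∑ i, z i * v i ^ k = 0) (htop : ∑ i, z i * v i ^ N = 1) :
    (fun ε => ∑ i, ∑ j, z i * z j * f (ε * (v i * v j)) - c N * ε ^ N)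
      =O[𝓝 0] fun ε => ε ^ (N + 1) := by
  set P := (FormalMultilinearSeries.ofScalars ℝ c).partialSum (N + 1)
  have hP (ε : ℝ) : ∑ i, ∑ j, z i * z j * P (ε * (v i * v j)) = c N * ε ^ N := by
    have hexpand : ∑ i, ∑ j, z i * z j * P (ε * (v i * v j))
        = ∑ k ∈ Finset.range (N + 1), c k * ∑ i, ∑ j, z i * z j * (ε * (v i * v j)) ^ k := by
      simp only [P, FormalMultilinearSeries.partialSum, FormalMultilinearSeries.ofScalars_apply_eq,
        smul_eq_mul, Finset.mul_sum]
      refine (Finset.sum_congr rfl fun i _ => Finset.sum_comm).trans ?_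
      rw [Finset.sum_comm]
      refine Finset.sum_congr rfl fun k _ => Finset.sum_congr rfl fun i _ =>
        Finset.sum_congr rfl fun j _ => ?_
      ring
    rw [hexpand, Finset.sum_range_succ, sum_sum_mul_mul_mul_pow, htop, Finset.sum_eq_zero]
    · ring
    · intro k hk
      rw [sum_sum_mul_mul_mul_pow, hlow k (Finset.mem_range.mp hk)]
      ring
  have hR (w : ℝ) : (fun ε => f (ε * w) - P (ε * w)) =O[𝓝 0] fun ε => ε ^ (N + 1) := by
    have hw : Tendsto (fun ε : ℝ => ε * w) (𝓝 0) (𝓝 0) := by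
      simpa using (continuous_mul_const w).tendsto 0
    have h := (hf.isBigO_sub_partialSum_pow (N + 1)).comp_tendsto hw
    simp only [Function.comp_def, zero_add] at h
    refine h.trans (k := fun ε : ℝ => ε ^ (N + 1)) ?_
    refine IsBigO.of_bound (|w| ^ (N + 1)) (Eventually.of_forall fun ε => ?_)
    simp [mul_pow, mul_comm]
  have hsum := IsBigO.sum fun i (_ : i ∈ Finset.univ) => IsBigO.sum fun j (_ : j ∈ Finset.univ) =>
    (hR (v i * v j)).const_mul_left (z i * z j)
  refine hsum.congr_left fun ε => ?_
  simp only [Finset.sum_apply, ← hP ε, ← Finset.sum_sub_distrib, mul_sub]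

theorem eventually_neg_of_isBigO_sub_mul_pow {g : ℝ → ℝ} {c : ℝ} {N : ℕ} (hc : c < 0)
    (hg : (fun ε => g ε - c * ε ^ N) =O[𝓝 0] fun ε => ε ^ (N + 1)) :
    ∀ᶠ ε in 𝓝[>] 0, g ε < 0 := by
  obtain ⟨C, hC⟩ := hg.bound
  have hsmall : ∀ᶠ ε : ℝ in 𝓝 0, C * ε < -c := by
    refine (continuous_const_mul C).tendsto' 0 0 (mul_zero C) |>.eventually (gt_mem_nhds ?_)
    linarith
  filter_upwards [nhdsWithin_le_nhds hC, nhdsWithin_le_nhds hsmall, self_mem_nhdsWithin]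
    with ε hbound hε (hpos : 0 < ε)
  rw [Real.norm_eq_abs, Real.norm_of_nonneg (by positivity)] at hbound
  have hεN : 0 < ε ^ N := by positivity
  calc g ε ≤ c * ε ^ N + C * ε ^ (N + 1) := by linarith [le_abs_self (g ε - c * ε ^ N)]
    _ = ε ^ N * (c + C * ε) := by ring
    _ < 0 := mul_neg_of_pos_of_neg hεN (by linarith)

theorem exists_sum_mul_pow_eq {K : Type*} [Field K] {N : ℕ} {v : Fin N → K}
    (hv : Function.Injective v) (b : Fin N → K) :
    ∃ z : Fin N → K, ∀ k : Fin N, ∑ i, z i * v i ^ (k : ℕ) = b k := by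
  have hdet : IsUnit (vandermonde v).det := (det_vandermonde_ne_zero_iff.mpr hv).isUnit
  refine ⟨b ᵥ* (vandermonde v)⁻¹, fun k => ?_⟩
  rw [← congrFun (show (b ᵥ* (vandermonde v)⁻¹) ᵥ* vandermonde v = b by
    rw [vecMul_vecMul, nonsing_inv_mul _ hdet, vecMul_one]) k]
  simp [vecMul, dotProduct]

theorem posSemidef_of_one_add_mul_mul {ι : Type*} [Finite ι] {ε : ℝ} (hε : 0 ≤ ε) (v : ι → ℝ) :
    (of fun i j => 1 + ε * (v i * v j) : Matrix ι ι ℝ).PosSemidef := by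
  have h : (of fun i j => 1 + ε * (v i * v j) : Matrix ι ι ℝ)
      = vecMulVec 1 (star 1) + ε • vecMulVec v (star v) := by
    ext i j; simp [vecMulVec_apply]
  rw [h]
  exact (posSemidef_vecMulVec_self_star 1).add ((posSemidef_vecMulVec_self_star v).smul hε)

theorem exists_posSemidef_not_posSemidef_map_of_coeff_neg {F : ℝ → ℝ} {c : ℕ → ℝ} {N : ℕ}
    (hF : HasFPowerSeriesAt (fun x => F (1 + x)) (FormalMultilinearSeries.ofScalars ℝ c) 0)
    (hc : c N < 0) :
    ∃ A : Matrix (Fin (N + 1)) (Fin (N + 1)) ℝ,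
      A.PosSemidef ∧ (∀ i j, 0 < A i j) ∧ ¬ (A.map F).PosSemidef := by
  set v : Fin (N + 1) → ℝ := fun i => i + 1
  have hvpos (i) : 0 < v i := by positivity
  have hv : Function.Injective v := fun i j h => Fin.ext (by simpa [v] using h)
  obtain ⟨z, hz⟩ := exists_sum_mul_pow_eq hv (Pi.single (Fin.last N) 1)
  have hlow : ∀ k < N, ∑ i, z i * v i ^ k = 0 := fun k hk => by
    simpa [Fin.ext_iff, hk.ne] using hz ⟨k, by omega⟩
  have htop : ∑ i, z i * v i ^ N = 1 := by simpa using hz (Fin.last N)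
  obtain ⟨ε, hneg, hε⟩ := (eventually_neg_of_isBigO_sub_mul_pow hc
    (isBigO_sum_sum_mul_sub_coeff_mul_pow hF hlow htop)).and self_mem_nhdsWithin |>.exists
  have hentry (i j) : 0 < 1 + ε * (v i * v j) := by
    have := hvpos i; have := hvpos j; positivity
  refine ⟨of fun i j => 1 + ε * (v i * v j), posSemidef_of_one_add_mul_mul hε.le v,
    hentry, fun hPSD => hneg.not_ge ?_⟩
  convert hPSD.dotProduct_mulVec_nonneg z using 1
  simp only [star_trivial, dotProduct, mulVec, map_apply, of_apply, Finset.mul_sum]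
  exact Finset.sum_congr rfl fun i _ => Finset.sum_congr rfl fun j _ => by ring

theorem not_posSemidef_map_submatrix_of_leftInverse {ι κ α R : Type*}
    [Ring R] [PartialOrder R] [StarRing R] {F : α → R} {B : Matrix ι ι α}
    {f : κ → ι} {g : ι → κ} (hfg : Function.LeftInverse f g) (hB : ¬ (B.map F).PosSemidef) :
    ¬ ((B.submatrix f f).map F).PosSemidef := fun h => hB <| by
  simpa [submatrix_map, submatrix_submatrix, hfg.comp_eq_id] using h.submatrix g

theorem hasFPowerSeriesAt_powF_one_add (α : ℝ) :
    HasFPowerSeriesAt (fun x => powF α (1 + x)) (binomialSeries ℝ α) 0 := by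
  refine Real.one_add_rpow_hasFPowerSeriesAt_zero.congr ?_
  have : ∀ᶠ x : ℝ in 𝓝 0, 1 + x ≠ 0 :=
    ((continuous_const_add 1).tendsto' 0 1 (add_zero 1)).eventually_ne one_ne_zero
  filter_upwards [this] with x hx
  simp [powF, hx]

theorem Ring.choose_neg_of_lt_of_lt {a : ℝ} {m : ℕ} (h₁ : (m : ℝ) < a) (h₂ : a < m + 1) :
    Ring.choose a (m + 2) < 0 := by
  rw [Ring.choose_eq_smul, ← Polynomial.aeval_eq_smeval, Polynomial.aeval_def,
    Polynomial.eval₂_eq_eval_map, descPochhammer_map, descPochhammer_succ_eval, smul_eq_mul]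
  have hpos : 0 < (descPochhammer ℝ (m + 1)).eval a := descPochhammer_pos (by push_cast; linarith)
  have hlast : a - ((m + 1 : ℕ) : ℝ) < 0 := by push_cast; linarith
  exact mul_neg_of_pos_of_neg (by positivity) (mul_neg_of_pos_of_neg hpos hlast)

theorem stmt1_general (n : ℕ) (α : ℝ) (h0 : 0 < α) (h1 : α < (n : ℝ) - 2)
    (hnotint : ∀ k : ℕ, 0 < k → α ≠ k) :
    ∃ A : Matrix (Fin n) (Fin n) ℝ, A.PosSemidef ∧ (∀ i j, 0 ≤ A i j) ∧
      ¬ (A.map (powF α)).PosSemidef := by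
  obtain ⟨m, hm, hm'⟩ : ∃ m : ℕ, (m : ℝ) < α ∧ α < m + 1 := by
    refine ⟨⌊α⌋₊, (Nat.floor_le h0.le).lt_of_ne fun h => ?_, Nat.lt_floor_add_one α⟩
    rcases Nat.eq_zero_or_pos ⌊α⌋₊ with h' | h'
    · rw [h', Nat.cast_zero] at h; exact h0.ne h
    · exact hnotint _ h' h.symm
  obtain ⟨B, hB, hBpos, hBF⟩ := exists_posSemidef_not_posSemidef_map_of_coeff_neg
    (hasFPowerSeriesAt_powF_one_add α) (Ring.choose_neg_of_lt_of_lt hm hm')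
  have hmn : m + 2 + 1 ≤ n := by
    have : (m : ℝ) + 2 < n := by linarith
    exact_mod_cast this
  set f := Function.invFun (Fin.castLE hmn)
  exact ⟨B.submatrix f f, hB.submatrix f, fun i j => (hBpos _ _).le,
    not_posSemidef_map_submatrix_of_leftInverse
      (Function.leftInverse_invFun (Fin.castLE_injective hmn)) hBF⟩

/-- FitzGerald–Horn, negative part: if `α ∈ (0, n - 2)` is not a positive integer, then some
`n × n` positive semidefinite matrix with nonnegative entries has a non-positive-semidefinite
entrywise `α`-th power. -/
theorem stmt1 (n : ℕ) (hn : 2 ≤ n) (α : ℝ) (h0 : 0 < α) (h1 : α < (n : ℝ) - 2)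
    (hnotint : ∀ k : ℕ, 0 < k → α ≠ k) :
    ∃ A : Matrix (Fin n) (Fin n) ℝ, A.PosSemidef ∧ (∀ i j, 0 ≤ A i j) ∧
      ¬ (A.map (powF α)).PosSemidef :=
  stmt1_general n α h0 h1 hnotint
end

section
/- Let G = (V,E) be a finite simple graph on V = {1,…,n} admitting a decomposition (A,C,B), and let M be an n×n real symmetric matrix whose principal submatrices M_AA and M_BB are invertible. Then M ∈ P_G(ℝ) if and only if M = M₁ + M₂ for some matrices M₁, M₂ ∈ P_G(ℝ) such that all entries of M₁ outside the rows and columns indexed by A ∪ C vanish, M₁ restricted to (A∪C)×(A∪C) lies in P_{G_{A∪C}}(ℝ), all entries of M₂ outside the rows and columns indexed by B ∪ C vanish, and M₂ restricted to (B∪C)×(B∪C) lies in P_{G_{B∪C}}(ℝ). -/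
open Matrix

/-- `P_G(I)`: symmetric positive semidefinite matrices with entries in `I`, vanishing at
off-diagonal positions corresponding to non-edges of `G`. -/
def PG {V : Type*} [Fintype V] (G : SimpleGraph V) (I : Set ℝ) : Set (Matrix V V ℝ) :=
  {M | M.PosSemidef ∧ (∀ i j, M i j ∈ I) ∧ ∀ i j, i ≠ j → ¬ G.Adj i j → M i j = 0}

/-- `H_G`: powers `α` such that `A ↦ A^{∘α}` maps `P_G([0,∞))` into `P_G(ℝ)`. -/
noncomputable def HSet {V : Type*} [Fintype V] (G : SimpleGraph V) : Set ℝ :=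
  {α | ∀ A ∈ PG G (Set.Ici 0), A.map (powF α) ∈ PG G Set.univ}

/-- `H_G^ψ`: powers `α` such that `ψ_α[-]` maps `P_G(ℝ)` into `P_G(ℝ)`. -/
noncomputable def HSetPsi {V : Type*} [Fintype V] (G : SimpleGraph V) : Set ℝ :=
  {α | ∀ A ∈ PG G Set.univ, A.map (psiF α) ∈ PG G Set.univ}

/-- `H_G^φ`: powers `α` such that `φ_α[-]` maps `P_G(ℝ)` into `P_G(ℝ)`. -/
noncomputable def HSetPhi {V : Type*} [Fintype V] (G : SimpleGraph V) : Set ℝ :=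
  {α | ∀ A ∈ PG G Set.univ, A.map (phiF α) ∈ PG G Set.univ}

/-- A graph is chordal if every cycle of length at least 4 has a chord, i.e. an edge of `G`
joining two vertices of the cycle that is not an edge of the cycle. -/
def IsChordalG {V : Type*} (G : SimpleGraph V) : Prop :=
  ∀ ⦃v : V⦄ (w : G.Walk v v), w.IsCycle → 4 ≤ w.length →
    ∃ i j : V, i ∈ w.support ∧ j ∈ w.support ∧ G.Adj i j ∧ ¬ w.toSubgraph.Adj i j
/-- `K_r^{(1)}` (the complete graph on `r` vertices minus one edge) is a subgraph of `G`:
there are `r` distinct vertices, all pairs of which are adjacent except possibly one fixed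
pair. -/
def HasKr1 {V : Type*} (G : SimpleGraph V) (r : ℕ) : Prop :=
  ∃ f : Fin r → V, Function.Injective f ∧ ∃ a b : Fin r,
    ∀ i j : Fin r, i ≠ j → ¬(i = a ∧ j = b) → ¬(i = b ∧ j = a) → G.Adj (f i) (f j)

/-- `(A, C, B)` is a decomposition of `G`: the three sets partition the vertex set, `C`
induces a complete subgraph, and `C` separates `A` from `B` (every walk from a vertex of
`A` to a vertex of `B` meets `C`). -/
def IsDecompositionG {n : ℕ} (G : SimpleGraph (Fin n)) (A C B : Finset (Fin n)) : Prop :=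
  (∀ v, v ∈ A ∨ v ∈ C ∨ v ∈ B) ∧ Disjoint A C ∧ Disjoint A B ∧ Disjoint C B ∧
    G.IsClique (C : Set (Fin n)) ∧
    ∀ a ∈ A, ∀ b ∈ B, ∀ p : G.Walk a b, ∃ c ∈ C, c ∈ p.support

/-- Decomposition of matrices in `P_G(ℝ)` along a graph decomposition `(A, C, B)`:
if the principal submatrices `M_AA` and `M_BB` are invertible, then `M ∈ P_G(ℝ)` iff
`M = M₁ + M₂` with `M₁, M₂ ∈ P_G(ℝ)` supported on `(A ∪ C) × (A ∪ C)` and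
`(B ∪ C) × (B ∪ C)` respectively, with restrictions in `P_{G_{A∪C}}(ℝ)` and
`P_{G_{B∪C}}(ℝ)`. -/
theorem stmt8 (n : ℕ) (G : SimpleGraph (Fin n)) (A C B : Finset (Fin n))
    (hdec : IsDecompositionG G A C B) (M : Matrix (Fin n) (Fin n) ℝ) (hsym : M.IsSymm)
    (hAinv : IsUnit (M.submatrix (Subtype.val : {x // x ∈ A} → Fin n)
      (Subtype.val : {x // x ∈ A} → Fin n)))
    (hBinv : IsUnit (M.submatrix (Subtype.val : {x // x ∈ B} → Fin n)
      (Subtype.val : {x // x ∈ B} → Fin n))) :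
    M ∈ PG G Set.univ ↔
      ∃ M₁ M₂ : Matrix (Fin n) (Fin n) ℝ, M = M₁ + M₂ ∧
        M₁ ∈ PG G Set.univ ∧ M₂ ∈ PG G Set.univ ∧
        (∀ i j, (i ∉ A ∪ C ∨ j ∉ A ∪ C) → M₁ i j = 0) ∧
        M₁.submatrix (Subtype.val : (((A ∪ C : Finset (Fin n)) : Set (Fin n)) : Type) → Fin n)
            Subtype.val ∈ PG (G.induce ((A ∪ C : Finset (Fin n)) : Set (Fin n))) Set.univ ∧
        (∀ i j, (i ∉ B ∪ C ∨ j ∉ B ∪ C) → M₂ i j = 0) ∧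
        M₂.submatrix (Subtype.val : (((B ∪ C : Finset (Fin n)) : Set (Fin n)) : Type) → Fin n)
            Subtype.val ∈ PG (G.induce ((B ∪ C : Finset (Fin n)) : Set (Fin n))) Set.univ := by
  classical
  obtain ⟨hcov, hAC, hAB, hCB, hclique, hsep⟩ := hdec
  constructor
  · intro hM
    obtain ⟨hPSD, -, hpat⟩ := hM
    have hMH : Mᴴ = M := hPSD.1
    have hMs : ∀ i j, M j i = M i j := fun i j => hsym.apply i j
    -- vertices of A and B are non-adjacent and distinct
    have hABadj : ∀ a ∈ A, ∀ b ∈ B, ¬ G.Adj a b := by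
      intro a ha b hb hadj
      obtain ⟨c, hc, hcs⟩ := hsep a ha b hb hadj.toWalk
      simp [SimpleGraph.Walk.support_cons] at hcs
      rcases hcs with rfl | rfl
      · exact (Finset.disjoint_left.mp hAC) ha hc
      · exact (Finset.disjoint_left.mp hCB) hc hb
    have hABne : ∀ a ∈ A, ∀ b ∈ B, a ≠ b := fun a ha b hb h =>
      (Finset.disjoint_left.mp hAB) ha (h ▸ hb)
    have hMAB : ∀ i ∈ B, ∀ a ∈ A, M i a = 0 := by
      intro i hi a ha
      exact hpat i a (fun h => hABne a ha i hi h.symm)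
        (fun h => hABadj a ha i hi h.symm)
    -- set up the block machinery
    set S : Matrix {x // x ∈ A} {x // x ∈ A} ℝ :=
      M.submatrix (Subtype.val : {x // x ∈ A} → Fin n) Subtype.val with hSdef
    have hSdet : IsUnit S.det := (Matrix.isUnit_iff_isUnit_det S).mp hAinv
    have hSpsd : S.PosSemidef := hPSD.submatrix _
    have hSipsd : S⁻¹.PosSemidef := hSpsd.inv
    have hSiH : S⁻¹ᴴ = S⁻¹ := hSipsd.1
    have hSinvS : S⁻¹ * S = 1 := Matrix.nonsing_inv_mul S hSdet
    set E : Matrix (Fin n) {x // x ∈ A} ℝ :=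
      Matrix.of fun i a => if i = (a : Fin n) then (1 : ℝ) else 0 with hEdef
    have hXE : ∀ {m : Type} [Fintype m] (X : Matrix m (Fin n) ℝ) (i : m)
        (a : {x // x ∈ A}), (X * E) i a = X i ↑a := by
      intro m _ X i a
      simp [hEdef, Matrix.mul_apply, mul_ite, mul_one, mul_zero]
    have hEX : ∀ {m : Type} [Fintype m] (X : Matrix (Fin n) m ℝ)
        (a : {x // x ∈ A}) (j : m), (Eᴴ * X) a j = X ↑a j := by
      intro m _ X a j
      simp [hEdef, Matrix.mul_apply, Matrix.conjTranspose_apply, ite_mul, one_mul,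
        zero_mul, eq_comm]
    have hEME : Eᴴ * M * E = S := by
      ext a b
      rw [hXE (Eᴴ * M) a b, hEX M a ↑b]
      rfl
    set M₁ : Matrix (Fin n) (Fin n) ℝ := M * E * S⁻¹ * Eᴴ * M with hM₁def
    -- right-associated collapse lemmas
    have hEMEr : ∀ {m : Type} [Fintype m] (Y : Matrix {x // x ∈ A} m ℝ),
        Eᴴ * (M * (E * Y)) = S * Y := by
      intro m _ Y
      rw [← Matrix.mul_assoc, ← Matrix.mul_assoc, hEME]
    have hScan : ∀ {m : Type} [Fintype m] (Y : Matrix {x // x ∈ A} m ℝ),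
        S⁻¹ * (S * Y) = Y := by
      intro m _ Y
      rw [← Matrix.mul_assoc, hSinvS, Matrix.one_mul]
    have hM₁psd : M₁.PosSemidef := by
      have h := hSipsd.conjTranspose_mul_mul_same (Eᴴ * M)
      have h2 : M₁ = (Eᴴ * M)ᴴ * S⁻¹ * (Eᴴ * M) := by
        simp only [hM₁def, Matrix.conjTranspose_mul, Matrix.conjTranspose_conjTranspose,
          hMH, Matrix.mul_assoc]
      rw [h2]; exact h
    have hM₁H : M₁ᴴ = M₁ := by
      simp only [hM₁def, Matrix.conjTranspose_mul, Matrix.conjTranspose_conjTranspose,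
        hMH, hSiH, Matrix.mul_assoc]
    set P : Matrix (Fin n) (Fin n) ℝ := E * S⁻¹ * Eᴴ * M with hPdef
    have hM₁P : M₁ = M * P := by
      simp only [hM₁def, hPdef, Matrix.mul_assoc]
    have hPH : Pᴴ * M = M * P := by
      simp only [hPdef, Matrix.conjTranspose_mul, Matrix.conjTranspose_conjTranspose,
        hMH, hSiH, Matrix.mul_assoc]
    have hPP : M * P * P = M * P := by
      simp only [hPdef, Matrix.mul_assoc]
      rw [hEMEr, hScan]
    have hM₂psd : (M - M₁).PosSemidef := by
      have h := hPSD.conjTranspose_mul_mul_same (1 - P)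
      have hK : (1 - P)ᴴ * M * (1 - P) = M - M₁ := by
        simp only [Matrix.conjTranspose_sub, Matrix.conjTranspose_one, Matrix.sub_mul,
          Matrix.mul_sub, Matrix.one_mul, Matrix.mul_one]
        rw [hPH, hPP, hM₁P]
        abel
      rw [← hK]; exact h
    -- entrywise facts about M₁
    have hrow0 : ∀ i ∈ B, ∀ j, M₁ i j = 0 := by
      intro i hi j
      have h : M₁ = (M * E) * (S⁻¹ * (Eᴴ * M)) := by
        simp only [hM₁def, Matrix.mul_assoc]
      rw [h, Matrix.mul_apply]
      refine Finset.sum_eq_zero fun a _ => ?_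
      rw [hXE M i a, hMAB i hi ↑a a.2, zero_mul]
    have hsym0 : ∀ i j, M₁ i j = M₁ j i := by
      intro i j
      conv_lhs => rw [← hM₁H]
      simp [Matrix.conjTranspose_apply]
    have hcol0 : ∀ j ∈ B, ∀ i, M₁ i j = 0 := fun j hj i =>
      (hsym0 i j).trans (hrow0 j hj i)
    have hM₁E : M₁ * E = M * E := by
      simp only [hM₁def, Matrix.mul_assoc]
      rw [show Eᴴ * (M * E) = S from by rw [← Matrix.mul_assoc, hEME], hSinvS,
        Matrix.mul_one]
    have hAgreeCol : ∀ j ∈ A, ∀ i, M₁ i j = M i j := by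
      intro j hj i
      have h : M₁ i ↑(⟨j, hj⟩ : {x // x ∈ A}) = M i ↑(⟨j, hj⟩ : {x // x ∈ A}) := by
        have := congrFun (congrFun hM₁E i) ⟨j, hj⟩
        rwa [hXE, hXE] at this
      exact h
    have hAgreeRow : ∀ i ∈ A, ∀ j, M₁ i j = M i j := by
      intro i hi j
      rw [hsym0, hAgreeCol i hi j, hMs]
    have hM₁pat : ∀ i j, i ≠ j → ¬ G.Adj i j → M₁ i j = 0 := by
      intro i j hne hadj
      rcases hcov i with hiA | hiC | hiB
      · rw [hAgreeRow i hiA j]; exact hpat i j hne hadj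
      · rcases hcov j with hjA | hjC | hjB
        · rw [hAgreeCol j hjA i]; exact hpat i j hne hadj
        · exact (hadj (hclique (by simpa using hiC) (by simpa using hjC) hne)).elim
        · exact hcol0 j hjB i
      · exact hrow0 i hiB j
    have hBmem : ∀ i, i ∉ A ∪ C → i ∈ B := by
      intro i hi
      rcases hcov i with h | h | h
      · exact (hi (Finset.mem_union_left _ h)).elim
      · exact (hi (Finset.mem_union_right _ h)).elim
      · exact h
    have hAmem : ∀ i, i ∉ B ∪ C → i ∈ A := by
      intro i hi
      rcases hcov i with h | h | h
      · exact h
      · exact (hi (Finset.mem_union_right _ h)).elim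
      · exact (hi (Finset.mem_union_left _ h)).elim
    have hres : ∀ (s : Finset (Fin n)) (X : Matrix (Fin n) (Fin n) ℝ), X.PosSemidef →
        (∀ i j, i ≠ j → ¬ G.Adj i j → X i j = 0) →
        X.submatrix (Subtype.val : ((s : Set (Fin n)) : Type) → Fin n) Subtype.val ∈
          PG (G.induce (s : Set (Fin n))) Set.univ := by
      intro s X hX hpatX
      refine ⟨hX.submatrix _, fun i j => trivial, ?_⟩
      intro i j hij hadj
      exact hpatX ↑i ↑j (fun h => hij (Subtype.ext h)) (by simpa using hadj)
    refine ⟨M₁, M - M₁, by abel, ⟨hM₁psd, fun i j => trivial, hM₁pat⟩,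
      ⟨hM₂psd, fun i j => trivial, ?_⟩, ?_, hres _ _ hM₁psd hM₁pat, ?_, ?_⟩
    · intro i j hne hadj
      rw [Matrix.sub_apply, hpat i j hne hadj, hM₁pat i j hne hadj, sub_zero]
    · intro i j hij
      rcases hij with hi | hj
      · exact hrow0 i (hBmem i hi) j
      · exact hcol0 j (hBmem j hj) i
    · intro i j hij
      rcases hij with hi | hj
      · rw [Matrix.sub_apply, hAgreeRow i (hAmem i hi) j, sub_self]
      · rw [Matrix.sub_apply, hAgreeCol j (hAmem j hj) i, sub_self]
    · refine hres _ _ hM₂psd ?_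
      intro i j hne hadj
      rw [Matrix.sub_apply, hpat i j hne hadj, hM₁pat i j hne hadj, sub_zero]
  · rintro ⟨M₁, M₂, rfl, h1, h2, -, -, -, -⟩
    refine ⟨h1.1.add h2.1, fun i j => trivial, ?_⟩
    intro i j hne hadj
    rw [Matrix.add_apply, h1.2.2 i j hne hadj, h2.2.2 i j hne hadj, add_zero]
end

section
/- Let G = (V,E) be a finite simple graph on V = {1,…,n} admitting a decomposition (A,C,B), and let f : ℝ → ℝ with f(0) = 0. Suppose that f[M] ∈ P_{G_{A∪C}}(ℝ) for every M ∈ P_{G_{A∪C}}(ℝ), that f[M] ∈ P_{G_{B∪C}}(ℝ) for every M ∈ P_{G_{B∪C}}(ℝ), and that f[X+Y] − f[X] − f[Y] is positive semidefinite for all |C|×|C| real symmetric positive semidefinite matrices X, Y (i.e., f[−] is Loewner super-additive on P_{G_C}(ℝ) = P_{|C|}(ℝ)). Then f[M] ∈ P_G(ℝ) for every M ∈ P_G(ℝ). -/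
open Matrix

/-!
Write `M` as the Gram matrix of vectors `v i`. Since `M` vanishes on `A × B`, projecting every
`v i` onto the span `K` of the `v a` (`a ∈ A`) and onto `Kᗮ` splits `M = M₁ + M₂` into positive
semidefinite matrices, `M₁` supported on `(A ∪ C)²` and `M₂` on `(B ∪ C)²`, both inheriting the
zero pattern of `M` because `C` is a clique. Hence
`f[M] = f[M₁] + f[M₂] + (f[M₁ + M₂] - f[M₁] - f[M₂])`: the first two terms are positive
semidefinite by the hypotheses on `G_{A∪C}` and `G_{B∪C}` (padding by zeros, as `f 0 = 0`), and
the last one is supported on `C²`, where it is positive semidefinite by super-additivity.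
-/

open scoped ComplexOrder InnerProductSpace

theorem Submodule.inner_starProjection_add_inner_starProjection_orthogonal {𝕜 E : Type*}
    [RCLike 𝕜] [NormedAddCommGroup E] [InnerProductSpace 𝕜 E] (K : Submodule 𝕜 E)
    [K.HasOrthogonalProjection] (x y : E) :
    ⟪K.starProjection x, K.starProjection y⟫_𝕜 + ⟪Kᗮ.starProjection x, Kᗮ.starProjection y⟫_𝕜
      = ⟪x, y⟫_𝕜 := by
  conv_rhs => rw [← K.starProjection_add_starProjection_orthogonal x,
    ← K.starProjection_add_starProjection_orthogonal y]
  have hxy :=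
    K.inner_right_of_mem_orthogonal (K.starProjection_apply_mem x) (Kᗮ.starProjection_apply_mem y)
  have hyx :=
    K.inner_left_of_mem_orthogonal (K.starProjection_apply_mem y) (Kᗮ.starProjection_apply_mem x)
  simp only [inner_add_left, inner_add_right, hxy, hyx, add_zero, zero_add]

namespace Matrix

variable {𝕜 ι : Type*} [RCLike 𝕜] [Fintype ι] [DecidableEq ι]

theorem PosSemidef.exists_eq_gram {M : Matrix ι ι 𝕜} (hM : M.PosSemidef) :
    ∃ v : ι → EuclideanSpace 𝕜 ι, M = gram 𝕜 v := by
  open scoped MatrixOrder in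
  obtain ⟨B, rfl⟩ := CStarAlgebra.nonneg_iff_eq_star_mul_self.mp hM.nonneg
  refine ⟨fun j => WithLp.toLp 2 fun k => B k j, ?_⟩
  ext i j
  simp [mul_apply, PiLp.inner_apply, mul_comm]

theorem PosSemidef.of_submatrix_of_eq_zero {M : Matrix ι ι 𝕜} (S : Finset ι)
    (hS : (M.submatrix ((↑) : S → ι) (↑)).PosSemidef)
    (hM : ∀ i j, i ∉ S ∨ j ∉ S → M i j = 0) :
    M.PosSemidef := by
  obtain ⟨v, hv⟩ := hS.exists_eq_gram
  convert posSemidef_gram 𝕜 fun i => if h : i ∈ S then v ⟨i, h⟩ else 0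
  ext i j
  by_cases hi : i ∈ S <;> by_cases hj : j ∈ S
  · simpa [hi, hj] using congrFun (congrFun hv ⟨i, hi⟩) ⟨j, hj⟩
  all_goals simp [hi, hj, hM i j (by tauto)]

theorem PosSemidef.exists_add_eq_of_block_eq_zero {M : Matrix ι ι 𝕜} (hM : M.PosSemidef)
    {A B : Set ι} (hAB : ∀ a ∈ A, ∀ b ∈ B, M a b = 0) :
    ∃ M₁ M₂ : Matrix ι ι 𝕜, M₁.PosSemidef ∧ M₂.PosSemidef ∧ M₁ + M₂ = M ∧
      (∀ i j, i ∈ B ∨ j ∈ B → M₁ i j = 0) ∧ (∀ i j, i ∈ A ∨ j ∈ A → M₂ i j = 0) := by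
  obtain ⟨v, rfl⟩ := hM.exists_eq_gram
  set K := Submodule.span 𝕜 (v '' A)
  have hA : ∀ a ∈ A, Kᗮ.starProjection (v a) = 0 := fun a ha =>
    K.starProjection_orthogonal_apply_eq_zero (Submodule.subset_span ⟨a, ha, rfl⟩)
  have hB : ∀ b ∈ B, K.starProjection (v b) = 0 := by
    intro b hb
    have hK : K ⟂ Submodule.span 𝕜 {v b} := Submodule.isOrtho_span.mpr <| by
      rintro _ ⟨a, ha, rfl⟩ _ rfl
      exact hAB a ha b hb
    exact K.starProjection_apply_eq_zero_iff.mpr <| hK.symm <| Submodule.mem_span_singleton_self _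
  refine ⟨gram 𝕜 (K.starProjection ∘ v), gram 𝕜 (Kᗮ.starProjection ∘ v), posSemidef_gram _ _,
    posSemidef_gram _ _, ?_, ?_, ?_⟩
  · ext i j
    exact K.inner_starProjection_add_inner_starProjection_orthogonal _ _
  · rintro i j (hi | hj)
    · simp [hB i hi]
    · simp [hB j hj]
  · rintro i j (hi | hj)
    · simp [hA i hi]
    · simp [hA j hj]

end Matrix

theorem SimpleGraph.eq_zero_of_separated {V : Type*} (G : SimpleGraph V) {A C B : Finset V}
    (hAC : Disjoint A C) (hCB : Disjoint C B)
    (hsep : ∀ a ∈ A, ∀ b ∈ B, ∀ p : G.Walk a b, ∃ c ∈ C, c ∈ p.support)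
    {M : Matrix V V ℝ} (hM : ∀ i j, i ≠ j → ¬ G.Adj i j → M i j = 0) :
    ∀ a ∈ A, ∀ b ∈ B, M a b = 0 := by
  intro a ha b hb
  have hC : ∀ c ∈ C, c ≠ a ∧ c ≠ b := fun c hc =>
    ⟨fun h => Finset.disjoint_left.mp hAC (h ▸ ha) hc,
      fun h => Finset.disjoint_left.mp hCB hc (h ▸ hb)⟩
  refine hM a b ?_ fun hadj => ?_
  · rintro rfl
    obtain ⟨c, hc, hca⟩ := hsep a ha a hb .nil
    exact (hC c hc).1 (by simpa using hca)
  · obtain ⟨c, hc, hcab⟩ := hsep a ha b hb hadj.toWalk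
    simp only [SimpleGraph.Walk.support_cons, SimpleGraph.Walk.support_nil, List.mem_cons,
      List.not_mem_nil, or_false] at hcab
    exact hcab.elim (hC c hc).1 (hC c hc).2

theorem posSemidef_map_of_add_eq_of_eq_zero {V : Type*} [Fintype V] [DecidableEq V]
    {G : SimpleGraph V} {S C T : Finset V} (hcover : ∀ v, v ∈ S ∨ v ∈ C ∨ v ∈ T)
    (hC : G.IsClique (C : Set V))
    {f : ℝ → ℝ} (hf0 : f 0 = 0)
    (hf : ∀ N ∈ PG (G.induce ((S ∪ C : Finset V) : Set V)) Set.univ,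
      N.map f ∈ PG (G.induce ((S ∪ C : Finset V) : Set V)) Set.univ)
    {M N N' : Matrix V V ℝ} (hMG : ∀ i j, i ≠ j → ¬ G.Adj i j → M i j = 0)
    (hN : N.PosSemidef) (hsum : N + N' = M) (hNT : ∀ i j, i ∈ T ∨ j ∈ T → N i j = 0)
    (hN'S : ∀ i j, i ∈ S ∨ j ∈ S → N' i j = 0) :
    (N.map f).PosSemidef := by
  have hT : ∀ v, v ∉ S ∪ C → v ∈ T := fun v hv => by
    simp only [Finset.mem_union, not_or] at hv
    have := hcover v
    tauto
  refine Matrix.PosSemidef.of_submatrix_of_eq_zero (S ∪ C) ?_ fun i j hij => ?_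
  · refine (hf _ ⟨hN.submatrix _, fun _ _ => trivial, ?_⟩).1
    rintro ⟨i, hi⟩ ⟨j, hj⟩ hne hadj
    simp only [SimpleGraph.comap_adj, Function.Embedding.coe_subtype, Matrix.submatrix_apply]
      at hadj ⊢
    have hij : i ≠ j := fun h => hne (Subtype.ext h)
    by_cases hS : i ∈ S ∨ j ∈ S
    · rw [← hMG i j hij hadj, ← hsum, Matrix.add_apply, hN'S i j hS, add_zero]
    · simp only [Finset.coe_union, Set.mem_union, Finset.mem_coe] at hi hj
      exact absurd (hC (by tauto) (by tauto) hij) hadj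
  · rw [Matrix.map_apply, hNT i j (hij.imp (hT i) (hT j)), hf0]

theorem posSemidef_map_add_sub_map_sub_map {V : Type*} [Fintype V] [DecidableEq V]
    (C : Finset V) {f : ℝ → ℝ} (hf0 : f 0 = 0)
    (hsuper : ∀ X Y : Matrix (Fin C.card) (Fin C.card) ℝ, X.PosSemidef → Y.PosSemidef →
      ((X + Y).map f - X.map f - Y.map f).PosSemidef)
    {M₁ M₂ : Matrix V V ℝ} (h₁ : M₁.PosSemidef) (h₂ : M₂.PosSemidef)
    (hvanish : ∀ i j, i ∉ C ∨ j ∉ C → M₁ i j = 0 ∨ M₂ i j = 0) :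
    ((M₁ + M₂).map f - M₁.map f - M₂.map f).PosSemidef := by
  have hC : (((M₁ + M₂).map f - M₁.map f - M₂.map f).submatrix
      (Subtype.val : C → V) Subtype.val).PosSemidef := by
    let e : C ≃ Fin C.card := C.equivFin
    convert (hsuper _ _ (h₁.submatrix (Subtype.val ∘ e.symm))
      (h₂.submatrix (Subtype.val ∘ e.symm))).submatrix e using 1
    ext i j
    simp
  refine Matrix.PosSemidef.of_submatrix_of_eq_zero C hC fun i j hij => ?_
  rcases hvanish i j hij with h | h <;> simp [h, hf0]

/-- If `f[-]` preserves positivity on `P_{G_{A∪C}}(ℝ)` and `P_{G_{B∪C}}(ℝ)` and is Loewner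
super-additive on `P_{|C|}(ℝ)`, then `f[-]` preserves positivity on `P_G(ℝ)`. -/
theorem stmt9 (n : ℕ) (G : SimpleGraph (Fin n)) (A C B : Finset (Fin n))
    (hdec : IsDecompositionG G A C B) (f : ℝ → ℝ) (hf0 : f 0 = 0)
    (hAC : ∀ M ∈ PG (G.induce ((A ∪ C : Finset (Fin n)) : Set (Fin n))) Set.univ,
      M.map f ∈ PG (G.induce ((A ∪ C : Finset (Fin n)) : Set (Fin n))) Set.univ)
    (hBC : ∀ M ∈ PG (G.induce ((B ∪ C : Finset (Fin n)) : Set (Fin n))) Set.univ,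
      M.map f ∈ PG (G.induce ((B ∪ C : Finset (Fin n)) : Set (Fin n))) Set.univ)
    (hsuper : ∀ X Y : Matrix (Fin C.card) (Fin C.card) ℝ, X.PosSemidef → Y.PosSemidef →
      ((X + Y).map f - X.map f - Y.map f).PosSemidef) :
    ∀ M ∈ PG G Set.univ, M.map f ∈ PG G Set.univ := by
  obtain ⟨hcover, hdisjAC, -, hdisjCB, hC, hsep⟩ := hdec
  rintro M ⟨hM, -, hMG⟩
  obtain ⟨M₁, M₂, h₁, h₂, hsum, h₁B, h₂A⟩ :=
    hM.exists_add_eq_of_block_eq_zero (A := A) (B := B)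
      (G.eq_zero_of_separated hdisjAC hdisjCB hsep hMG)
  have hf₁ := posSemidef_map_of_add_eq_of_eq_zero hcover hC hf0 hAC hMG h₁ hsum h₁B h₂A
  have hf₂ := posSemidef_map_of_add_eq_of_eq_zero (fun v => by have := hcover v; tauto) hC hf0
    hBC hMG h₂ ((add_comm _ _).trans hsum) h₂A h₁B
  have hD := posSemidef_map_add_sub_map_sub_map C hf0 hsuper h₁ h₂ fun i j hij => by
    have := hcover i; have := hcover j; have := h₁B i j; have := h₂A i j
    tauto
  refine ⟨?_, fun _ _ => trivial, fun i j hij hadj => by rw [map_apply, hMG i j hij hadj, hf0]⟩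
  rw [← hsum]
  convert (hf₁.add hf₂).add hD using 1
  abel
end

section
/- Let m ≥ 2 and let G be a simple graph such that the complete bipartite graph K_{2,2} is a subgraph of G and G is a subgraph of the complete bipartite graph K_{2,m} (on the same vertex set). Then H_G^φ = [2, ∞) and {1} ∪ [2, ∞) ⊆ H_G^ψ ⊆ [1, ∞). -/
open Matrix

/-!
For `α ≥ 2`, write a positive semidefinite matrix with the pattern of `K_{ι,κ}` as
`[[diag c, b], [bᵀ, diag d]]` and let `e i j = b i j ^ 2 / (c i * d j) ∈ [0, 1]`. Schur complements
give `∑ j, e i j ≤ 1` and `∑ i, e i j ≤ 1`. Since `e ^ (α - 1) ≤ e`, the quadratic form of `F[A]`,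
for any `F` with `|F x| = |x| ^ α`, dominates the sum over the edges `ij` of the forms of the
positive semidefinite `2 × 2` blocks
`[[c i ^ α * e i j, F (b i j)], [F (b i j), d j ^ α * e i j ^ (α - 1)]]`.
Signs play no role, so this covers `φ_α` and `ψ_α` alike.

Conversely, `G` contains a copy of `K_{2,2}`, a matrix on that copy extends by zero to `G`, and
principal submatrices of positive semidefinite matrices are positive semidefinite. Testing the
Gram matrix of `e₁, e₂, (1, 1), (-1, 1)` shows that `φ_α` fails for `α < 2` and `ψ_α` for `α < 1`.
-/

lemma phiF_zero (α : ℝ) : phiF α 0 = 0 := if_pos rfl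

lemma psiF_zero (α : ℝ) : psiF α 0 = 0 := if_pos rfl

lemma phiF_nonneg (α x : ℝ) : 0 ≤ phiF α x := by
  unfold phiF; split_ifs <;> positivity

lemma psiF_nonneg {x : ℝ} (α : ℝ) (hx : 0 ≤ x) : 0 ≤ psiF α x := by
  unfold psiF; split_ifs with h
  · exact le_rfl
  · rw [Real.sign_of_pos (lt_of_le_of_ne hx (Ne.symm h)), one_mul]; positivity

lemma abs_phiF {α : ℝ} (hα : α ≠ 0) (x : ℝ) : |phiF α x| = |x| ^ α := by
  rcases eq_or_ne x 0 with rfl | hx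
  · simp [phiF, Real.zero_rpow hα]
  · simp [phiF, hx, abs_of_nonneg (Real.rpow_nonneg (abs_nonneg x) α)]

lemma abs_psiF {α : ℝ} (hα : α ≠ 0) (x : ℝ) : |psiF α x| = |x| ^ α := by
  rcases eq_or_ne x 0 with rfl | hx
  · simp [psiF, Real.zero_rpow hα]
  · rcases x.sign_apply_eq_of_ne_zero hx with h | h <;>
      simp [psiF, hx, h, abs_of_nonneg (Real.rpow_nonneg (abs_nonneg x) α)]

lemma phiF_of_pos {x : ℝ} (α : ℝ) (hx : 0 < x) : phiF α x = x ^ α := by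
  rw [phiF, if_neg hx.ne', abs_of_pos hx]

lemma psiF_of_pos {x : ℝ} (α : ℝ) (hx : 0 < x) : psiF α x = x ^ α := by
  rw [psiF, if_neg hx.ne', Real.sign_of_pos hx, abs_of_pos hx, one_mul]

lemma phiF_neg (α x : ℝ) : phiF α (-x) = phiF α x := by
  simp [phiF]

lemma psiF_neg (α x : ℝ) : psiF α (-x) = -psiF α x := by
  rcases lt_trichotomy x 0 with h | rfl | h
  · simp [psiF, h.ne, Real.sign_of_neg h, Real.sign_of_pos (neg_pos.mpr h)]
  · simp [psiF]
  · simp [psiF, h.ne', Real.sign_of_pos h, Real.sign_of_neg (neg_neg_iff_pos.mpr h)]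

lemma psiF_one : psiF 1 = id := by
  funext x
  rcases lt_trichotomy x 0 with h | rfl | h
  · simp [psiF, h.ne, Real.sign_of_neg h, abs_of_neg h]
  · simp [psiF]
  · simp [psiF, h.ne', Real.sign_of_pos h, abs_of_pos h]

lemma mul_div_sq_eq_sq_div (a d : ℝ) : d * (a / d) ^ 2 = a ^ 2 / d := by
  rcases eq_or_ne d 0 with rfl | hd
  · simp
  · field_simp

lemma mul_sq_add_mul_sq_add_two_mul_nonneg {t s g : ℝ} (ht : 0 ≤ t) (hs : 0 ≤ s)
    (hg : g ^ 2 ≤ t * s) (x y : ℝ) : 0 ≤ t * x ^ 2 + s * y ^ 2 + 2 * (g * x * y) := by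
  have hdet : 0 ≤ t * s - g ^ 2 := sub_nonneg.mpr hg
  rcases (add_nonneg ht hs).eq_or_lt with hts | hts
  · obtain ⟨rfl, rfl⟩ : t = 0 ∧ s = 0 := ⟨by linarith, by linarith⟩
    obtain rfl : g = 0 := pow_eq_zero_iff two_ne_zero |>.mp (by nlinarith [sq_nonneg g])
    simp
  · -- `t` and `s` times the form are sums of squares
    refine nonneg_of_mul_nonneg_right (a := t + s) ?_ hts
    nlinarith [sq_nonneg (t * x + g * y), sq_nonneg (s * y + g * x),
      mul_nonneg hdet (sq_nonneg x), mul_nonneg hdet (sq_nonneg y)]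

lemma sq_eq_rpow_mul_rpow {α b c d e y : ℝ} (hα : α ≠ 0) (hc : 0 ≤ c) (hd : 0 ≤ d) (he : 0 ≤ e)
    (hy : |y| = |b| ^ α) (hb : c * d * e = b ^ 2) :
    y ^ 2 = c ^ α * e * (d ^ α * e ^ (α - 1)) := by
  have he_rpow : e ^ α = e * e ^ (α - 1) := by
    rw [← Real.rpow_one_add' he (by rwa [add_sub_cancel]), add_sub_cancel]
  calc y ^ 2 = (b ^ 2) ^ α := by rw [← sq_abs, hy, Real.rpow_pow_comm (abs_nonneg _), sq_abs]
    _ = (c * d * e) ^ α := by rw [hb]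
    _ = c ^ α * e * (d ^ α * e ^ (α - 1)) := by
      rw [Real.mul_rpow (mul_nonneg hc hd) he, Real.mul_rpow hc hd, he_rpow]
      ring

-- `0` when `A u u * A v v = 0`, by `x / 0 = 0`
noncomputable def Matrix.sqCorr {n : Type*} (A : Matrix n n ℝ) (u v : n) : ℝ :=
  A u v ^ 2 / (A u u * A v v)

namespace Matrix.PosSemidef

variable {n : Type*} {A : Matrix n n ℝ}

lemma sq_apply_le (hA : A.PosSemidef) (i j : n) : A i j ^ 2 ≤ A i i * A j j := by
  have hdet := (hA.submatrix ![i, j]).det_nonneg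
  rw [det_fin_two] at hdet
  simp only [submatrix_apply, Matrix.cons_val_zero, Matrix.cons_val_one,
    (isHermitian_iff_isSymm.mp hA.1).apply i j] at hdet
  linarith [sq (A i j)]

lemma sqCorr_nonneg (hA : A.PosSemidef) (u v : n) : 0 ≤ A.sqCorr u v :=
  div_nonneg (sq_nonneg _) (mul_nonneg hA.diag_nonneg hA.diag_nonneg)

lemma sqCorr_le_one (hA : A.PosSemidef) (u v : n) : A.sqCorr u v ≤ 1 :=
  div_le_one_of_le₀ (hA.sq_apply_le u v) (mul_nonneg hA.diag_nonneg hA.diag_nonneg)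

lemma mul_sqCorr (hA : A.PosSemidef) (u v : n) :
    A u u * A v v * A.sqCorr u v = A u v ^ 2 := by
  rcases eq_or_ne (A u u * A v v) 0 with h | h
  · rw [h, zero_mul]
    nlinarith [hA.sq_apply_le u v, sq_nonneg (A u v)]
  · exact mul_div_cancel₀ _ h

end Matrix.PosSemidef

section Transfer

variable {V W : Type*} [Fintype V] [Fintype W]

lemma PG_mono {G H : SimpleGraph V} (h : G ≤ H) (I : Set ℝ) : PG G I ⊆ PG H I :=
  fun _ ⟨hpsd, hI, hpat⟩ => ⟨hpsd, hI, fun u v huv hadj => hpat u v huv fun hG => hadj (h hG)⟩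

lemma map_mem_PG {G : SimpleGraph V} {I : Set ℝ} {F : ℝ → ℝ} (hF0 : F 0 = 0)
    {A : Matrix V V ℝ} (hA : A ∈ PG G I) (h : (A.map F).PosSemidef) :
    A.map F ∈ PG G Set.univ :=
  ⟨h, fun _ _ => trivial, fun u v huv hadj => by rw [map_apply, hA.2.2 u v huv hadj, hF0]⟩

lemma one_mem_HSetPsi (G : SimpleGraph V) : 1 ∈ HSetPsi G := fun A hA => by
  rwa [psiF_one, map_id]

lemma exists_mem_PG_submatrix_eq {G : SimpleGraph V} {H : SimpleGraph W} (f : H →g G)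
    (hf : Function.Injective f) {B : Matrix W W ℝ} (hB : B ∈ PG H Set.univ) :
    ∃ A ∈ PG G Set.univ, A.submatrix f f = B := by
  classical
  set P : Matrix W V ℝ := (1 : Matrix V V ℝ).submatrix f id
  have hP : P.submatrix id f = 1 := submatrix_one _ hf
  refine ⟨Pᴴ * B * P, ⟨hB.1.conjTranspose_mul_mul_same P, fun _ _ => trivial, ?_⟩, ?_⟩
  · intro u v huv hadj
    simp only [mul_apply, Finset.sum_mul]
    refine Finset.sum_eq_zero fun q _ => Finset.sum_eq_zero fun p _ => ?_
    simp only [P, conjTranspose_apply, submatrix_apply, one_apply, id, star_trivial]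
    split_ifs with hp hq <;> simp only [mul_zero, zero_mul, one_mul, mul_one]
    subst hp hq
    exact hB.2.2 p q (fun h => huv (h ▸ rfl)) fun h => hadj (f.map_adj h)
  · rw [submatrix_mul _ _ _ id _ Function.bijective_id,
      submatrix_mul _ _ _ id _ Function.bijective_id, ← conjTranspose_submatrix, hP]
    simp

lemma map_mem_PG_of_injective {G : SimpleGraph V} {H : SimpleGraph W} (f : H →g G)
    (hf : Function.Injective f) {F : ℝ → ℝ} (hF0 : F 0 = 0)
    (hG : ∀ A ∈ PG G Set.univ, A.map F ∈ PG G Set.univ) {B : Matrix W W ℝ}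
    (hB : B ∈ PG H Set.univ) : B.map F ∈ PG H Set.univ := by
  obtain ⟨A, hA, rfl⟩ := exists_mem_PG_submatrix_eq f hf hB
  refine map_mem_PG hF0 hB ?_
  rw [← submatrix_map]
  exact (hG A hA).1.submatrix f

end Transfer

section Bipartite

variable {ι κ : Type*} [Fintype ι] [Fintype κ]

lemma dotProduct_mulVec_sum_elim {M : Matrix (ι ⊕ κ) (ι ⊕ κ) ℝ} (hM : M.IsSymm)
    (hpat : ∀ u v, u ≠ v → ¬ (completeBipartiteGraph ι κ).Adj u v → M u v = 0)
    (x : ι → ℝ) (y : κ → ℝ) :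
    Sum.elim x y ⬝ᵥ M *ᵥ Sum.elim x y =
      ∑ i, M (.inl i) (.inl i) * x i ^ 2 + ∑ j, M (.inr j) (.inr j) * y j ^ 2 +
        2 * ∑ i, ∑ j, M (.inl i) (.inr j) * x i * y j := by
  have hι (i : ι) : (M *ᵥ Sum.elim x y) (.inl i) =
      M (.inl i) (.inl i) * x i + ∑ j, M (.inl i) (.inr j) * y j := by
    rw [mulVec, dotProduct, Fintype.sum_sum_type]
    congr 1
    exact Finset.sum_eq_single i (fun i' _ h => by
      rw [hpat _ _ (by simpa using h.symm) (by simp), zero_mul]) (by simp)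
  have hκ (j : κ) : (M *ᵥ Sum.elim x y) (.inr j) =
      ∑ i, M (.inl i) (.inr j) * x i + M (.inr j) (.inr j) * y j := by
    rw [mulVec, dotProduct, Fintype.sum_sum_type]
    congr 1
    · simp only [Sum.elim_inl, hM.apply (.inl _) (.inr j)]
    · exact Finset.sum_eq_single j (fun j' _ h => by
        rw [hpat _ _ (by simpa using h.symm) (by simp), zero_mul]) (by simp)
  rw [dotProduct, Fintype.sum_sum_type]
  simp only [Sum.elim_inl, Sum.elim_inr, hι, hκ, mul_add, Finset.sum_add_distrib, Finset.mul_sum]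
  rw [Finset.sum_comm (γ := κ)]
  have hx (i : ι) (a b : ℝ) : x i * (a * b) = a * x i * b := by ring
  have hy (j : κ) (a b : ℝ) : y j * (a * b) = a * b * y j := by ring
  have hsq (a b : ℝ) : a * b * b = a * b ^ 2 := by ring
  simp only [hx, hy, hsq, ← Finset.mul_sum]
  ring

lemma posSemidef_of_bipartite_dominated {M : Matrix (ι ⊕ κ) (ι ⊕ κ) ℝ} (hM : M.IsSymm)
    (hpat : ∀ u v, u ≠ v → ¬ (completeBipartiteGraph ι κ).Adj u v → M u v = 0)
    (t s : ι → κ → ℝ) (ht : ∀ i j, 0 ≤ t i j) (hs : ∀ i j, 0 ≤ s i j)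
    (hts : ∀ i j, M (.inl i) (.inr j) ^ 2 ≤ t i j * s i j)
    (hrow : ∀ i, ∑ j, t i j ≤ M (.inl i) (.inl i))
    (hcol : ∀ j, ∑ i, s i j ≤ M (.inr j) (.inr j)) :
    M.PosSemidef := by
  refine .of_dotProduct_mulVec_nonneg (isHermitian_iff_isSymm.mpr hM) fun z => ?_
  rw [star_trivial, ← Sum.elim_comp_inl_inr z, dotProduct_mulVec_sum_elim hM hpat]
  set x := z ∘ Sum.inl
  set y := z ∘ Sum.inr
  calc 0 ≤ ∑ i, ∑ j, (t i j * x i ^ 2 + s i j * y j ^ 2 + 2 * (M (.inl i) (.inr j) * x i * y j)) :=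
        Finset.sum_nonneg fun i _ => Finset.sum_nonneg fun j _ =>
          mul_sq_add_mul_sq_add_two_mul_nonneg (ht i j) (hs i j) (hts i j) _ _
    _ = ∑ i, (∑ j, t i j) * x i ^ 2 + ∑ j, (∑ i, s i j) * y j ^ 2 +
          2 * ∑ i, ∑ j, M (.inl i) (.inr j) * x i * y j := by
      simp only [Finset.sum_add_distrib, Finset.sum_mul, Finset.mul_sum]
      rw [Finset.sum_comm (f := fun i j => s i j * y j ^ 2)]
    _ ≤ _ := by
      gcongr with i _ j _
      · exact hrow i
      · exact hcol j

lemma submatrix_swap_mem_PG {A : Matrix (ι ⊕ κ) (ι ⊕ κ) ℝ} {I : Set ℝ}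
    (hA : A ∈ PG (completeBipartiteGraph ι κ) I) :
    A.submatrix Sum.swap Sum.swap ∈ PG (completeBipartiteGraph κ ι) I := by
  obtain ⟨hpsd, hI, hpat⟩ := hA
  refine ⟨hpsd.submatrix _, fun u v => hI _ _, fun u v huv hadj => hpat _ _ ?_ ?_⟩
  · exact fun h => huv (by simpa using congrArg Sum.swap h)
  · cases u <;> cases v <;> simp_all

lemma sum_sq_div_le_of_mem_PG_inl {A : Matrix (ι ⊕ κ) (ι ⊕ κ) ℝ}
    (hA : A ∈ PG (completeBipartiteGraph ι κ) Set.univ) (i : ι) :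
    ∑ j, A (.inl i) (.inr j) ^ 2 / A (.inr j) (.inr j) ≤ A (.inl i) (.inl i) := by
  classical
  obtain ⟨hpsd, -, hpat⟩ := hA
  have h := hpsd.dotProduct_mulVec_nonneg
    (Sum.elim (Pi.single i 1) fun j => -(A (.inl i) (.inr j) / A (.inr j) (.inr j)))
  rw [star_trivial, dotProduct_mulVec_sum_elim (isHermitian_iff_isSymm.mp hpsd.1) hpat] at h
  simp only [Pi.single_apply, ite_pow, one_pow, ne_eq, OfNat.ofNat_ne_zero, not_false_eq_true,
    zero_pow, mul_ite, mul_one, mul_zero, Finset.sum_ite_eq', Finset.mem_univ, ↓reduceIte, even_two,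
    Even.neg_pow, mul_div_sq_eq_sq_div, mul_neg, ite_mul, zero_mul, Finset.sum_neg_distrib,
    Finset.sum_ite_irrel, Finset.sum_const_zero, le_add_neg_iff_add_le, zero_add] at h
  simp only [← mul_div_assoc, ← sq] at h
  linarith

lemma sum_sq_div_le_of_mem_PG_inr {A : Matrix (ι ⊕ κ) (ι ⊕ κ) ℝ}
    (hA : A ∈ PG (completeBipartiteGraph ι κ) Set.univ) (j : κ) :
    ∑ i, A (.inl i) (.inr j) ^ 2 / A (.inl i) (.inl i) ≤ A (.inr j) (.inr j) := by
  have hsymm := isHermitian_iff_isSymm.mp hA.1.1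
  simpa [hsymm.apply (.inl _) (.inr j)] using
    sum_sq_div_le_of_mem_PG_inl (submatrix_swap_mem_PG hA) j

lemma sum_sqCorr_inl_le_one {A : Matrix (ι ⊕ κ) (ι ⊕ κ) ℝ}
    (hA : A ∈ PG (completeBipartiteGraph ι κ) Set.univ) (i : ι) :
    ∑ j, A.sqCorr (.inl i) (.inr j) ≤ 1 := by
  have h (j : κ) : A.sqCorr (.inl i) (.inr j) =
      A (.inl i) (.inr j) ^ 2 / A (.inr j) (.inr j) / A (.inl i) (.inl i) := by
    rw [sqCorr, div_div, mul_comm]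
  simp only [h, ← Finset.sum_div]
  exact div_le_one_of_le₀ (sum_sq_div_le_of_mem_PG_inl hA i) hA.1.diag_nonneg

lemma sum_sqCorr_inr_le_one {A : Matrix (ι ⊕ κ) (ι ⊕ κ) ℝ}
    (hA : A ∈ PG (completeBipartiteGraph ι κ) Set.univ) (j : κ) :
    ∑ i, A.sqCorr (.inl i) (.inr j) ≤ 1 := by
  simp only [sqCorr, ← div_div, ← Finset.sum_div]
  exact div_le_one_of_le₀ (sum_sq_div_le_of_mem_PG_inr hA j) hA.1.diag_nonneg

theorem posSemidef_map_of_mem_PG_completeBipartiteGraph {α : ℝ} (hα : 2 ≤ α) {F : ℝ → ℝ}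
    (hF : ∀ x, |F x| = |x| ^ α) (hF_nonneg : ∀ x, 0 ≤ x → 0 ≤ F x)
    {A : Matrix (ι ⊕ κ) (ι ⊕ κ) ℝ} (hA : A ∈ PG (completeBipartiteGraph ι κ) Set.univ) :
    (A.map F).PosSemidef := by
  have hF0 : F 0 = 0 := abs_eq_zero.mp (by rw [hF, abs_zero, Real.zero_rpow (by linarith)])
  have hF_of_nonneg (x : ℝ) (hx : 0 ≤ x) : F x = x ^ α := by
    rw [← abs_of_nonneg (hF_nonneg x hx), hF, abs_of_nonneg hx]
  set c : ι → ℝ := fun i => A (.inl i) (.inl i)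
  set d : κ → ℝ := fun j => A (.inr j) (.inr j)
  set e : ι → κ → ℝ := fun i j => A.sqCorr (.inl i) (.inr j)
  have hc (i : ι) : 0 ≤ c i := hA.1.diag_nonneg
  have hd (j : κ) : 0 ≤ d j := hA.1.diag_nonneg
  have he (i : ι) (j : κ) : 0 ≤ e i j := hA.1.sqCorr_nonneg _ _
  refine posSemidef_of_bipartite_dominated ((isHermitian_iff_isSymm.mp hA.1.1).map F)
    (fun u v huv hadj => by rw [map_apply, hA.2.2 u v huv hadj, hF0])
    (fun i j => c i ^ α * e i j) (fun i j => d j ^ α * e i j ^ (α - 1))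
    (fun i j => mul_nonneg (Real.rpow_nonneg (hc i) _) (he i j))
    (fun i j => mul_nonneg (Real.rpow_nonneg (hd j) _) (Real.rpow_nonneg (he i j) _))
    (fun i j => (sq_eq_rpow_mul_rpow (by linarith) (hc i) (hd j) (he i j) (hF _)
      (hA.1.mul_sqCorr _ _)).le) (fun i => ?_) (fun j => ?_)
  · calc ∑ j, c i ^ α * e i j = c i ^ α * ∑ j, e i j := (Finset.mul_sum ..).symm
      _ ≤ c i ^ α := mul_le_of_le_one_right (Real.rpow_nonneg (hc i) _) (sum_sqCorr_inl_le_one hA i)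
      _ = A.map F (.inl i) (.inl i) := (hF_of_nonneg _ (hc i)).symm
  · calc ∑ i, d j ^ α * e i j ^ (α - 1) ≤ ∑ i, d j ^ α * e i j := by
          gcongr with i
          · exact Real.rpow_nonneg (hd j) _
          · exact Real.rpow_le_self_of_le_one (he i j) (hA.1.sqCorr_le_one _ _) (by linarith)
      _ = d j ^ α * ∑ i, e i j := (Finset.mul_sum ..).symm
      _ ≤ d j ^ α := mul_le_of_le_one_right (Real.rpow_nonneg (hd j) _) (sum_sqCorr_inr_le_one hA j)
      _ = A.map F (.inr j) (.inr j) := (hF_of_nonneg _ (hd j)).symm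

lemma Ici_two_subset_HSetPhi {G : SimpleGraph (ι ⊕ κ)} (hG : G ≤ completeBipartiteGraph ι κ) :
    Set.Ici 2 ⊆ HSetPhi G := fun α (hα : 2 ≤ α) A hA =>
  map_mem_PG (phiF_zero α) hA <| posSemidef_map_of_mem_PG_completeBipartiteGraph hα
    (abs_phiF (by linarith)) (fun x _ => phiF_nonneg α x) (PG_mono hG _ hA)

lemma Ici_two_subset_HSetPsi {G : SimpleGraph (ι ⊕ κ)} (hG : G ≤ completeBipartiteGraph ι κ) :
    Set.Ici 2 ⊆ HSetPsi G := fun α (hα : 2 ≤ α) A hA =>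
  map_mem_PG (psiF_zero α) hA <| posSemidef_map_of_mem_PG_completeBipartiteGraph hα
    (abs_psiF (by linarith)) (fun _ hx => psiF_nonneg α hx) (PG_mono hG _ hA)

end Bipartite

section CycleGram

-- On `c4Gram`, `ψ_α` fixes the off-diagonal entries `±1`, `φ_α` turns `-1` into `1`, and both
-- turn the diagonal entries `2` into `2 ^ α`.
def c4Factor : Matrix (Fin 2) (Fin 2 ⊕ Fin 2) ℝ := fromCols 1 !![1, -1; 1, 1]

def c4Gram : Matrix (Fin 2 ⊕ Fin 2) (Fin 2 ⊕ Fin 2) ℝ := c4Factorᴴ * c4Factor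

lemma c4Gram_eq_fromBlocks :
    c4Gram = fromBlocks 1 !![1, -1; 1, 1] !![1, 1; -1, 1] !![2, 0; 0, 2] := by
  rw [c4Gram, c4Factor, conjTranspose_fromCols_eq_fromRows_conjTranspose, fromRows_mul_fromCols]
  congr 1 <;> ext i j <;> fin_cases i <;> fin_cases j <;> norm_num [mul_apply]

lemma c4Gram_mem_PG : c4Gram ∈ PG (completeBipartiteGraph (Fin 2) (Fin 2)) Set.univ := by
  refine ⟨posSemidef_conjTranspose_mul_self _, fun _ _ => trivial, ?_⟩
  rw [c4Gram_eq_fromBlocks]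
  rintro (i | i) (j | j) hij hadj <;> simp at hadj hij <;> fin_cases i <;> fin_cases j <;> simp_all

lemma dotProduct_c4Gram_map_mulVec {F : ℝ → ℝ} (hF0 : F 0 = 0) (x₀ x₁ y₀ y₁ : ℝ) :
    Sum.elim ![x₀, x₁] ![y₀, y₁] ⬝ᵥ (c4Gram.map F *ᵥ Sum.elim ![x₀, x₁] ![y₀, y₁]) =
      F 1 * (x₀ ^ 2 + x₁ ^ 2) + F 2 * (y₀ ^ 2 + y₁ ^ 2) +
        2 * (F 1 * (x₀ * y₀ + x₁ * y₀ + x₁ * y₁) + F (-1) * x₀ * y₁) := by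
  simp only [c4Gram_eq_fromBlocks, dotProduct, mulVec, map_apply, Fintype.sum_sum_type,
    Fin.sum_univ_two, Sum.elim_inl, Sum.elim_inr, fromBlocks_apply₁₁, fromBlocks_apply₁₂,
    fromBlocks_apply₂₁, fromBlocks_apply₂₂, of_apply, cons_val', cons_val_zero, cons_val_one,
    cons_val_fin_one, one_apply_eq, one_apply_ne zero_ne_one, one_apply_ne one_ne_zero, hF0]
  ring

lemma two_le_of_posSemidef_c4Gram_map_phiF {α : ℝ} (h : (c4Gram.map (phiF α)).PosSemidef) :
    2 ≤ α := by
  have hq := h.dotProduct_mulVec_nonneg (Sum.elim ![2, 2] ![-1, -1])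
  rw [star_trivial, dotProduct_c4Gram_map_mulVec (phiF_zero α), phiF_neg,
    phiF_of_pos α one_pos, phiF_of_pos α two_pos, Real.one_rpow] at hq
  rw [← Real.rpow_le_rpow_left_iff one_lt_two]
  norm_num
  linarith

lemma one_le_of_posSemidef_c4Gram_map_psiF {α : ℝ} (h : (c4Gram.map (psiF α)).PosSemidef) :
    1 ≤ α := by
  have hq := h.dotProduct_mulVec_nonneg (Sum.elim ![2, 0] ![-1, 1])
  rw [star_trivial, dotProduct_c4Gram_map_mulVec (psiF_zero α), psiF_neg,
    psiF_of_pos α one_pos, psiF_of_pos α two_pos, Real.one_rpow] at hq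
  rw [← Real.rpow_le_rpow_left_iff one_lt_two]
  norm_num
  linarith

variable {V : Type*} [Fintype V] {G : SimpleGraph V}

lemma HSetPhi_subset_Ici_two (f : completeBipartiteGraph (Fin 2) (Fin 2) →g G)
    (hf : Function.Injective f) : HSetPhi G ⊆ Set.Ici 2 := fun α hα =>
  two_le_of_posSemidef_c4Gram_map_phiF
    (map_mem_PG_of_injective f hf (phiF_zero α) hα c4Gram_mem_PG).1

lemma HSetPsi_subset_Ici_one (f : completeBipartiteGraph (Fin 2) (Fin 2) →g G)
    (hf : Function.Injective f) : HSetPsi G ⊆ Set.Ici 1 := fun α hα =>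
  one_le_of_posSemidef_c4Gram_map_psiF
    (map_mem_PG_of_injective f hf (psiF_zero α) hα c4Gram_mem_PG).1

end CycleGram

theorem stmt19_general (m : ℕ) (G : SimpleGraph (Fin 2 ⊕ Fin m))
    (hsub : G ≤ completeBipartiteGraph (Fin 2) (Fin m))
    (hK22 : ∃ f : Fin 2 ⊕ Fin 2 → Fin 2 ⊕ Fin m, Function.Injective f ∧
      ∀ u v, (completeBipartiteGraph (Fin 2) (Fin 2)).Adj u v → G.Adj (f u) (f v)) :
    HSetPhi G = Set.Ici 2 ∧
    {(1 : ℝ)} ∪ Set.Ici 2 ⊆ HSetPsi G ∧ HSetPsi G ⊆ Set.Ici 1 := by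
  obtain ⟨f, hf, hadj⟩ := hK22
  let fK22 : completeBipartiteGraph (Fin 2) (Fin 2) →g G := ⟨f, hadj _ _⟩
  exact ⟨(HSetPhi_subset_Ici_two fK22 hf).antisymm (Ici_two_subset_HSetPhi hsub),
    Set.union_subset (Set.singleton_subset_iff.mpr (one_mem_HSetPsi G))
      (Ici_two_subset_HSetPsi hsub),
    HSetPsi_subset_Ici_one fK22 hf⟩

/-- If `K_{2,2} ⊆ G ⊆ K_{2,m}` (on the vertex set of `K_{2,m}`, `m ≥ 2`), then
`H_G^φ = [2, ∞)` and `{1} ∪ [2, ∞) ⊆ H_G^ψ ⊆ [1, ∞)`. -/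
theorem stmt19 (m : ℕ) (hm : 2 ≤ m) (G : SimpleGraph (Fin 2 ⊕ Fin m))
    (hsub : G ≤ completeBipartiteGraph (Fin 2) (Fin m))
    (hK22 : ∃ f : Fin 2 ⊕ Fin 2 → Fin 2 ⊕ Fin m, Function.Injective f ∧
      ∀ u v, (completeBipartiteGraph (Fin 2) (Fin 2)).Adj u v → G.Adj (f u) (f v)) :
    HSetPhi G = Set.Ici 2 ∧
    {(1 : ℝ)} ∪ Set.Ici 2 ⊆ HSetPsi G ∧ HSetPsi G ⊆ Set.Ici 1 :=
  stmt19_general m G hsub hK22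
end
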